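/- The set P of prime numbers is dense in the topological space X := (ℕ⁺, τ). -/

import Mathlib

/-- `σ n` is the set of positive integers coprime to `n`. -/
def sigmaSet (n : ℕ+) : Set ℕ+ := {m : ℕ+ | Nat.gcd (n : ℕ) (m : ℕ) = 1}

/-- The base `β = {σ n : n ∈ ℕ⁺}`. -/
def betaBase : Set (Set ℕ+) := {s : Set ℕ+ | ∃ n : ℕ+, s = sigmaSet n}

/-- The topology `τ` on `ℕ⁺` generated by `β`. -/
def tau : TopologicalSpace ℕ+ := TopologicalSpace.generateFrom betaBase

/-!
Since `σ (a * b) = σ a ∩ σ b` and `σ 1 = ℕ⁺`, the sets `σ n` form a basis of `τ`, so it suffices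
that each `σ n` contains a prime; any prime larger than `n` will do.
-/

open Set TopologicalSpace

lemma sigmaSet_one : sigmaSet 1 = univ := by
  ext m
  simp [sigmaSet]

lemma sigmaSet_mul (a b : ℕ+) : sigmaSet (a * b) = sigmaSet a ∩ sigmaSet b := by
  ext m
  exact Nat.coprime_mul_iff_left

lemma isTopologicalBasis_betaBase : @IsTopologicalBasis ℕ+ tau betaBase := by
  have hbasis := @isTopologicalBasis_of_subbasis_of_inter ℕ+ tau betaBase rfl <| by
    rintro _ ⟨a, rfl⟩ _ ⟨b, rfl⟩
    exact ⟨a * b, (sigmaSet_mul a b).symm⟩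
  have univ_mem : univ ∈ betaBase := ⟨1, sigmaSet_one.symm⟩
  rwa [insert_eq_of_mem univ_mem] at hbasis

lemma exists_prime_mem_sigmaSet (n : ℕ+) : ∃ p ∈ sigmaSet n, (p : ℕ).Prime := by
  obtain ⟨p, hnp, hp⟩ := Nat.exists_infinite_primes ((n : ℕ) + 1)
  exact ⟨⟨p, hp.pos⟩, (Nat.coprime_of_lt_prime n.ne_zero hnp hp).symm, hp⟩

theorem primes_dense : @Dense ℕ+ tau {p : ℕ+ | (p : ℕ).Prime} := by
  refine (@IsTopologicalBasis.dense_iff ℕ+ tau _ isTopologicalBasis_betaBase _).2 ?_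
  rintro _ ⟨n, rfl⟩ -
  exact exists_prime_mem_sigmaSet n
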